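/- arXiv:1704.00708 — 2 statements merged into one kernel-verified Lean document; each statement's English description precedes it below -/
import Mathlib

section
/- Let U, U* be d×r real matrices, and let R be an orthogonal r×r matrix minimizing ‖U − U*Z‖_F over orthogonal matrices Z. Set Δ = U − U*R, M = UU^T, M* = U*(U*)^T. Then ‖ΔΔ^T‖_F² ≤ 2‖M − M*‖_F² and σ_r(M*)·‖Δ‖_F² ≤ (1/(2(√2−1)))·‖M − M*‖_F², where σ_r(M*) is the r-th largest singular value of M*. -/
open Matrix BigOperators

noncomputable section

/-- Squared Frobenius norm of a real matrix. -/
def frobSq {m n : Type*} [Fintype m] [Fintype n] (A : Matrix m n ℝ) : ℝ :=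
  ∑ i, ∑ j, (A i j) ^ 2

/-!
Write `B = U* R` and `Δ = U - B`. Testing the minimality of `R` against `R W` for Householder
reflections `W` and products of two of them shows that `Bᵀ U` is positive semidefinite; in
particular `Δᵀ B = Bᵀ U - Bᵀ B` is symmetric. Then `M - M* = B Δᵀ + Δ Bᵀ + Δ Δᵀ`, and with
`G = Bᵀ B`, `T = Δᵀ Δ`, `Q = Δᵀ B` one gets
`‖M - M*‖² = 2 tr (G T) + ‖T‖² + 2 ‖Q‖² + 4 tr (Q T)`, where
`tr (G T) + tr (Q T) = tr (Bᵀ U T) ≥ 0`.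
Completing the square in `T + c Q` for `c = 2` and `c = √2` gives the two bounds, using
`σ_r ‖Δ‖² ≤ tr (G T)` for the second.
-/

section FrobeniusSq

variable {m n : Type*} [Fintype m] [Fintype n]

theorem frobSq_nonneg (A : Matrix m n ℝ) : 0 ≤ frobSq A :=
  Finset.sum_nonneg fun _ _ => Finset.sum_nonneg fun _ _ => sq_nonneg _

theorem frobSq_eq_trace_transpose_mul_self (A : Matrix m n ℝ) : frobSq A = (Aᵀ * A).trace := by
  simp only [frobSq, trace, diag, mul_apply, transpose_apply, sq]
  exact Finset.sum_comm

theorem frobSq_eq_trace_mul_self {A : Matrix n n ℝ} (hA : A.IsSymm) : frobSq A = (A * A).trace := by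
  rw [frobSq_eq_trace_transpose_mul_self, hA.eq]

theorem frobSq_mul_transpose_self (A : Matrix m n ℝ) : frobSq (A * Aᵀ) = frobSq (Aᵀ * A) := by
  simp only [frobSq_eq_trace_transpose_mul_self, transpose_mul, transpose_transpose,
    Matrix.mul_assoc]
  rw [trace_mul_comm, Matrix.mul_assoc, Matrix.mul_assoc]

theorem frobSq_add_smul {Q T : Matrix n n ℝ} (hQ : Q.IsSymm) (hT : T.IsSymm) (c : ℝ) :
    frobSq (T + c • Q) = frobSq T + 2 * c * (Q * T).trace + c ^ 2 * frobSq Q := by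
  rw [frobSq_eq_trace_mul_self (hT.add (hQ.smul c)), frobSq_eq_trace_mul_self hT,
    frobSq_eq_trace_mul_self hQ]
  simp only [add_mul, mul_add, Matrix.smul_mul, Matrix.mul_smul, trace_add, trace_smul,
    smul_eq_mul, trace_mul_comm T Q]
  ring

end FrobeniusSq

section Householder

variable {n : Type*} [Fintype n] [DecidableEq n]

-- For `v = 0` this is `1`, since `2 / 0 = 0`; so it is orthogonal for every `v`.
def householder (v : n → ℝ) : Matrix n n ℝ := 1 - (2 / (v ⬝ᵥ v)) • vecMulVec v v

theorem householder_mulVec (v x : n → ℝ) :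
    householder v *ᵥ x = x - (2 / (v ⬝ᵥ v) * (v ⬝ᵥ x)) • v := by
  simp [householder, sub_mulVec, smul_mulVec, vecMulVec_mulVec, smul_smul]

theorem trace_householder_mul (v : n → ℝ) (A : Matrix n n ℝ) :
    (householder v * A).trace = A.trace - 2 / (v ⬝ᵥ v) * (v ⬝ᵥ A *ᵥ v) := by
  simp [householder, sub_mul, vecMulVec_mul, dotProduct_mulVec, dotProduct_comm]

theorem householder_mem_orthogonalGroup (v : n → ℝ) : householder v ∈ orthogonalGroup n ℝ := by
  rw [mem_orthogonalGroup_iff]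
  have hT : (householder v)ᵀ = householder v := by
    simp [householder, transpose_sub, transpose_smul, transpose_vecMulVec]
  rw [hT]
  by_cases hv : v ⬝ᵥ v = 0
  · simp [householder, hv]
  · simp only [householder, sub_mul, mul_sub, one_mul, mul_one, Matrix.smul_mul,
      Matrix.mul_smul, vecMulVec_mul_vecMulVec, smul_smul]
    rw [vecMulVec_smul, smul_smul,
      show 2 / (v ⬝ᵥ v) * (2 / (v ⬝ᵥ v)) * (v ⬝ᵥ v) = 2 / (v ⬝ᵥ v) + 2 / (v ⬝ᵥ v) by
        field_simp; ring, add_smul]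
    abel

end Householder

section TraceMaximal

variable {n : Type*} [Fintype n] [DecidableEq n] {S : Matrix n n ℝ}

theorem dotProduct_mulVec_nonneg_of_forall_trace_mul_le
    (h : ∀ W ∈ orthogonalGroup n ℝ, (W * S).trace ≤ S.trace) (v : n → ℝ) :
    0 ≤ v ⬝ᵥ S *ᵥ v := by
  rcases eq_or_ne v 0 with rfl | hv
  · simp
  have hvv : 0 < 2 / (v ⬝ᵥ v) :=
    div_pos two_pos (by simpa using dotProduct_self_star_pos_iff.mpr hv)
  have hW := h _ (householder_mem_orthogonalGroup v)
  rw [trace_householder_mul] at hW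
  exact nonneg_of_mul_nonneg_right (by linarith) hvv

theorem isSymm_of_forall_trace_mul_le (h : ∀ W ∈ orthogonalGroup n ℝ, (W * S).trace ≤ S.trace) :
    S.IsSymm := by
  ext i j
  rcases eq_or_ne i j with rfl | hij
  · rfl
  -- the rotation `H_v H_{e_i}`, `v = e_i + t e_j`, turns `tr (W S) ≤ tr S` into a quadratic in `t`
  have hquad : ∀ t : ℝ, 0 ≤ (S i i + S j j) * (t * t) + (S j i - S i j) * t + 0 := by
    intro t
    have hW := h _ (mul_mem (householder_mem_orthogonalGroup (Pi.single i 1 + t • Pi.single j 1))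
      (householder_mem_orthogonalGroup (Pi.single i 1)))
    rw [Matrix.mul_assoc, trace_householder_mul, trace_householder_mul, ← mulVec_mulVec,
      householder_mulVec] at hW
    simp only [dotProduct_single, Pi.single_eq_same, mul_one, div_one, mulVec_single,
      MulOpposite.op_one, one_smul, single_dotProduct, col_apply, one_mul, dotProduct_add,
      Pi.add_apply, Pi.smul_apply, ne_eq, hij, not_false_eq_true, Pi.single_eq_of_ne, smul_eq_mul,
      mul_zero, add_zero, dotProduct_smul, hij.symm, zero_add, mulVec_add, mulVec_smul,
      dotProduct_sub, add_dotProduct, smul_dotProduct, tsub_le_iff_right] at hW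
    have : 0 < 1 + t * t := by nlinarith [mul_self_nonneg t]
    field_simp at hW
    linarith
  have hdisc := discrim_le_zero hquad
  rw [discrim, mul_zero, sub_zero] at hdisc
  have hsq : (S j i - S i j) ^ 2 = 0 := le_antisymm hdisc (sq_nonneg _)
  exact sub_eq_zero.mp (pow_eq_zero_iff two_ne_zero |>.mp hsq)

theorem posSemidef_of_forall_trace_mul_le
    (h : ∀ W ∈ orthogonalGroup n ℝ, (W * S).trace ≤ S.trace) : S.PosSemidef :=
  .of_dotProduct_mulVec_nonneg (isSymm_of_forall_trace_mul_le h)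
    fun v => dotProduct_mulVec_nonneg_of_forall_trace_mul_le h (star v)

end TraceMaximal

section Procrustes

variable {m n : Type*} [Fintype m] [Fintype n] [DecidableEq n]

theorem transpose_mem_orthogonalGroup {W : Matrix n n ℝ} (hW : W ∈ orthogonalGroup n ℝ) :
    Wᵀ ∈ orthogonalGroup n ℝ := by
  rw [mem_orthogonalGroup_iff, transpose_transpose, ← mem_orthogonalGroup_iff']
  exact hW

theorem frobSq_sub_mul_of_mem_orthogonalGroup (U V : Matrix m n ℝ) {Z : Matrix n n ℝ}
    (hZ : Z ∈ orthogonalGroup n ℝ) :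
    frobSq (U - V * Z) = frobSq U - 2 * (Zᵀ * Vᵀ * U).trace + frobSq V := by
  have hUVZ : (Uᵀ * (V * Z)).trace = (Zᵀ * Vᵀ * U).trace := by
    rw [← trace_transpose, transpose_mul, transpose_mul, transpose_transpose, Matrix.mul_assoc]
  have hVZ : ((V * Z)ᵀ * (V * Z)).trace = (Vᵀ * V).trace := by
    rw [transpose_mul, Matrix.mul_assoc, trace_mul_comm, Matrix.mul_assoc, Matrix.mul_assoc,
      (mem_orthogonalGroup_iff n ℝ).mp hZ, Matrix.mul_one]
  rw [frobSq_eq_trace_transpose_mul_self, frobSq_eq_trace_transpose_mul_self,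
    frobSq_eq_trace_transpose_mul_self, transpose_sub, Matrix.sub_mul, Matrix.mul_sub,
    Matrix.mul_sub, trace_sub, trace_sub, trace_sub, hUVZ, hVZ, transpose_mul]
  ring

theorem posSemidef_transpose_mul_of_isMinOn {U V : Matrix m n ℝ} {R : Matrix n n ℝ}
    (hR : R ∈ orthogonalGroup n ℝ)
    (hmin : IsMinOn (fun Z => frobSq (U - V * Z)) (orthogonalGroup n ℝ) R) :
    ((V * R)ᵀ * U).PosSemidef := by
  refine posSemidef_of_forall_trace_mul_le fun W hW => ?_
  have hRW := isMinOn_iff.mp hmin _ (mul_mem hR (transpose_mem_orthogonalGroup hW))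
  simp only [frobSq_sub_mul_of_mem_orthogonalGroup U V hR,
    frobSq_sub_mul_of_mem_orthogonalGroup U V (mul_mem hR (transpose_mem_orthogonalGroup hW)),
    transpose_mul, transpose_transpose, Matrix.mul_assoc] at hRW ⊢
  linarith

end Procrustes

section Perturbation

variable {m n : Type*} [Fintype m]

theorem isSymm_transpose_mul_self' (A : Matrix m n ℝ) : (Aᵀ * A).IsSymm := by
  rw [IsSymm, transpose_mul, transpose_transpose]

theorem isSymm_transpose_mul_of_posSemidef {B Δ : Matrix m n ℝ}
    (hS : (Bᵀ * (B + Δ)).PosSemidef) : (Δᵀ * B).IsSymm := by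
  have h := (isHermitian_iff_isSymm.mp hS.isHermitian).eq
  rw [Matrix.mul_add, transpose_add, transpose_mul, transpose_mul, transpose_transpose,
    add_right_inj] at h
  rw [IsSymm, transpose_mul, transpose_transpose, h]

variable [Fintype n]

theorem trace_mul_transpose_mul_self_nonneg {A : Matrix n n ℝ} (hA : A.PosSemidef)
    (Δ : Matrix m n ℝ) : 0 ≤ (A * (Δᵀ * Δ)).trace := by
  rw [trace_mul_cycle', ← Matrix.mul_assoc, ← conjTranspose_eq_transpose_of_trivial]
  exact (hA.mul_mul_conjTranspose_same Δ).trace_nonneg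

theorem mul_frobSq_le_trace_mul [DecidableEq n] {A : Matrix n n ℝ} {σ : ℝ}
    (hA : (A - σ • 1).PosSemidef) (Δ : Matrix m n ℝ) :
    σ * frobSq Δ ≤ (A * (Δᵀ * Δ)).trace := by
  have h := trace_mul_transpose_mul_self_nonneg hA Δ
  rw [Matrix.sub_mul, Matrix.smul_mul, Matrix.one_mul, trace_sub, trace_smul, smul_eq_mul,
    ← frobSq_eq_trace_transpose_mul_self] at h
  linarith

theorem frobSq_add_mul_transpose_sub {B Δ : Matrix m n ℝ} (hQ : (Δᵀ * B).IsSymm) :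
    frobSq ((B + Δ) * (B + Δ)ᵀ - B * Bᵀ) =
      2 * (Bᵀ * B * (Δᵀ * Δ)).trace + frobSq (Δᵀ * Δ) + 2 * frobSq (Δᵀ * B) +
        4 * (Δᵀ * B * (Δᵀ * Δ)).trace := by
  have hBΔ : Bᵀ * Δ = Δᵀ * B := by rw [← hQ.eq, transpose_mul, transpose_transpose]
  have hX : (B + Δ) * (B + Δ)ᵀ - B * Bᵀ = B * Δᵀ + Δ * Bᵀ + Δ * Δᵀ := by
    rw [transpose_add]
    simp only [Matrix.add_mul, Matrix.mul_add]
    abel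
  have hcyc : ∀ P₁ P₂ P₃ P₄ : Matrix m n ℝ,
      (P₁ * P₂ᵀ * (P₃ * P₄ᵀ)).trace = (P₂ᵀ * P₃ * (P₄ᵀ * P₁)).trace := fun P₁ _ _ _ => by
    simp only [← Matrix.mul_assoc]
    rw [trace_mul_comm _ P₁]
    simp only [Matrix.mul_assoc]
  rw [hX, frobSq_eq_trace_mul_self hQ, frobSq_eq_trace_mul_self (isSymm_transpose_mul_self' Δ),
    frobSq_eq_trace_transpose_mul_self]
  simp only [transpose_add, transpose_mul, transpose_transpose, Matrix.add_mul, Matrix.mul_add,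
    trace_add, hcyc, hBΔ]
  rw [trace_mul_comm (Δᵀ * Δ) (Bᵀ * B), trace_mul_comm (Δᵀ * Δ) (Δᵀ * B)]
  ring

theorem trace_add_trace_nonneg_of_posSemidef {B Δ : Matrix m n ℝ}
    (hS : (Bᵀ * (B + Δ)).PosSemidef) :
    0 ≤ (Bᵀ * B * (Δᵀ * Δ)).trace + (Δᵀ * B * (Δᵀ * Δ)).trace := by
  have h := trace_mul_transpose_mul_self_nonneg hS Δ
  rw [Matrix.mul_add, Matrix.add_mul, trace_add] at h
  rwa [← (isSymm_transpose_mul_of_posSemidef hS).eq, transpose_mul, transpose_transpose]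

theorem frobSq_mul_transpose_le_of_posSemidef {B Δ : Matrix m n ℝ}
    (hS : (Bᵀ * (B + Δ)).PosSemidef) :
    frobSq (Δ * Δᵀ) ≤ 2 * frobSq ((B + Δ) * (B + Δ)ᵀ - B * Bᵀ) := by
  have hQ := isSymm_transpose_mul_of_posSemidef hS
  -- `2 ‖M - M*‖² - ‖T‖² = 4 (tr (G T) + tr (Q T)) + ‖T + 2 Q‖²`
  have hsq := frobSq_nonneg (Δᵀ * Δ + (2 : ℝ) • (Δᵀ * B))
  rw [frobSq_add_smul hQ (isSymm_transpose_mul_self' Δ)] at hsq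
  rw [frobSq_mul_transpose_self, frobSq_add_mul_transpose_sub hQ]
  linarith [trace_add_trace_nonneg_of_posSemidef hS]

theorem trace_mul_le_of_posSemidef {B Δ : Matrix m n ℝ} (hS : (Bᵀ * (B + Δ)).PosSemidef) :
    2 * (√2 - 1) * (Bᵀ * B * (Δᵀ * Δ)).trace ≤ frobSq ((B + Δ) * (B + Δ)ᵀ - B * Bᵀ) := by
  have hQ := isSymm_transpose_mul_of_posSemidef hS
  -- `‖M - M*‖² - 2 (√2 - 1) tr (G T) = 2 (2 - √2) (tr (G T) + tr (Q T)) + ‖T + √2 Q‖²`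
  have hsq := frobSq_nonneg (Δᵀ * Δ + √2 • (Δᵀ * B))
  rw [frobSq_add_smul hQ (isSymm_transpose_mul_self' Δ), Real.sq_sqrt zero_le_two] at hsq
  rw [frobSq_add_mul_transpose_sub hQ]
  have h2 : √2 < 2 := by
    rw [Real.sqrt_lt' two_pos]; norm_num
  have := mul_nonneg (sub_nonneg.mpr h2.le) (trace_add_trace_nonneg_of_posSemidef hS)
  linarith

end Perturbation

section LowerBound

variable {m n : Type*} [Fintype m] [Fintype n] [DecidableEq n]

theorem posSemidef_sub_smul_one_of_forall_le {A : Matrix n n ℝ} (hA : A.IsSymm) {σ : ℝ}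
    (h : ∀ x : n → ℝ, σ * ∑ i, x i ^ 2 ≤ x ⬝ᵥ A *ᵥ x) : (A - σ • 1).PosSemidef := by
  refine .of_dotProduct_mulVec_nonneg
    (isHermitian_iff_isSymm.mpr (hA.sub (isSymm_one.smul σ))) fun x => ?_
  have hx := h x
  simp only [star_trivial, sub_mulVec, smul_mulVec, one_mulVec, dotProduct_sub,
    dotProduct_smul, smul_eq_mul]
  simp only [dotProduct, ← sq] at hx ⊢
  linarith

theorem posSemidef_mul_orthogonal_sub_smul_one {V : Matrix m n ℝ} {R : Matrix n n ℝ}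
    (hR : R ∈ orthogonalGroup n ℝ) {σ : ℝ} (h : (Vᵀ * V - σ • 1).PosSemidef) :
    ((V * R)ᵀ * (V * R) - σ • 1).PosSemidef := by
  have hconj := h.conjTranspose_mul_mul_same R
  rw [conjTranspose_eq_transpose_of_trivial, Matrix.mul_sub, Matrix.sub_mul, Matrix.mul_smul,
    Matrix.smul_mul, Matrix.mul_one, (mem_orthogonalGroup_iff' n ℝ).mp hR] at hconj
  simpa only [transpose_mul, Matrix.mul_assoc] using hconj

end LowerBound

/-- Procrustes-alignment lemma: if `R` is an orthogonal matrix minimizing `‖U − U*Z‖_F`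
over the orthogonal group, `Δ = U − U*R`, `M = UUᵀ`, `M* = U*(U*)ᵀ`, and `σr` is a lower
bound on the eigenvalues of `(U*)ᵀU*` (in particular `σr = σ_r(M*)`), then
`‖ΔΔᵀ‖_F² ≤ 2‖M − M*‖_F²` and `σr‖Δ‖_F² ≤ (1/(2(√2−1)))‖M − M*‖_F²`. -/
theorem stmt2 {d r : ℕ} (U Ustar : Matrix (Fin d) (Fin r) ℝ)
    (R : Matrix (Fin r) (Fin r) ℝ) (hR : R ∈ Matrix.orthogonalGroup (Fin r) ℝ)
    (hmin : ∀ Z ∈ Matrix.orthogonalGroup (Fin r) ℝ,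
      frobSq (U - Ustar * R) ≤ frobSq (U - Ustar * Z))
    (σr : ℝ)
    (hσ : ∀ x : Fin r → ℝ, σr * (∑ i, x i ^ 2) ≤ x ⬝ᵥ (Ustarᵀ * Ustar).mulVec x) :
    frobSq ((U - Ustar * R) * (U - Ustar * R)ᵀ) ≤
        2 * frobSq (U * Uᵀ - Ustar * Ustarᵀ) ∧
      σr * frobSq (U - Ustar * R) ≤
        (1 / (2 * (Real.sqrt 2 - 1))) * frobSq (U * Uᵀ - Ustar * Ustarᵀ) := by
  have hS := posSemidef_transpose_mul_of_isMinOn hR (isMinOn_iff.mpr hmin)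
  have hG := posSemidef_mul_orthogonal_sub_smul_one hR
    (posSemidef_sub_smul_one_of_forall_le (isSymm_transpose_mul_self' Ustar) hσ)
  have hM : Ustar * Ustarᵀ = Ustar * R * (Ustar * R)ᵀ := by
    rw [transpose_mul, Matrix.mul_assoc, ← Matrix.mul_assoc R, (mem_orthogonalGroup_iff _ ℝ).mp hR,
      Matrix.one_mul]
  obtain ⟨Δ, rfl⟩ : ∃ Δ, U = Ustar * R + Δ := ⟨U - Ustar * R, by abel⟩
  rw [add_sub_cancel_left, hM]
  refine ⟨frobSq_mul_transpose_le_of_posSemidef hS, ?_⟩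
  have hc : 0 < 2 * (√2 - 1) := by
    have : 1 < √2 := by rw [Real.lt_sqrt zero_le_one]; norm_num
    linarith
  rw [one_div_mul_eq_div, le_div_iff₀ hc]
  calc σr * frobSq Δ * (2 * (√2 - 1))
      ≤ ((Ustar * R)ᵀ * (Ustar * R) * (Δᵀ * Δ)).trace * (2 * (√2 - 1)) :=
        mul_le_mul_of_nonneg_right (mul_frobSq_le_trace_mul hG Δ) hc.le
    _ ≤ _ := by linarith [trace_mul_le_of_posSemidef hS]
end
end

section
/- Let M1, M2 be d1×d2 real matrices with singular value decompositions M1 = U1 D1 V1^T and M2 = U2 D2 V2^T. Then ‖U1 D1 U1^T − U2 D2 U2^T‖_F² + ‖V1 D1 V1^T − V2 D2 V2^T‖_F² ≤ 2‖M1 − M2‖_F². -/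
/-!
Expand the three squared Frobenius norms through traces. With `P = U1ᵀ U2` and `Q = V1ᵀ V2`,
every self-term is `∑ D1ᵢ²` or `∑ D2ᵢ²`, the cross terms on the left are `∑ D1ᵢ D2ⱼ Pᵢⱼ²` and
`∑ D1ᵢ D2ⱼ Qᵢⱼ²`, and the cross term on the right is `∑ D1ᵢ D2ⱼ Pᵢⱼ Qᵢⱼ`. So the right side
minus the left side is `2 ∑ D1ᵢ D2ⱼ (Pᵢⱼ - Qᵢⱼ)² ≥ 0`.
-/

open Matrix BigOperators

noncomputable section

section Trace

variable {m n κ R : Type*} [Fintype m] [Fintype n] [Fintype κ] [DecidableEq κ]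

lemma frobSq_eq_trace (A : Matrix m n ℝ) : frobSq A = trace (Aᵀ * A) := by
  simp only [frobSq, trace, diag, mul_apply, transpose_apply, sq]
  exact Finset.sum_comm

lemma frobSq_sub (X Y : Matrix m n ℝ) :
    frobSq (X - Y) = trace (Xᵀ * X) + trace (Yᵀ * Y) - 2 * trace (Xᵀ * Y) := by
  have hYX : trace (Yᵀ * X) = trace (Xᵀ * Y) := by
    rw [← trace_transpose, transpose_mul, transpose_transpose]
  rw [frobSq_eq_trace, transpose_sub, Matrix.sub_mul, Matrix.mul_sub, Matrix.mul_sub,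
    trace_sub, trace_sub, trace_sub, hYX]
  ring

variable [CommSemiring R]

lemma trace_transpose_mul_diagonal_mul (A C : Matrix m κ R) (B F : Matrix n κ R)
    (D E : κ → R) :
    trace ((A * diagonal D * Bᵀ)ᵀ * (C * diagonal E * Fᵀ)) =
      ∑ i, ∑ j, D i * E j * (Aᵀ * C) i j * (Bᵀ * F) i j := by
  have hcycle : (A * diagonal D * Bᵀ)ᵀ * (C * diagonal E * Fᵀ) =
      B * (diagonal D * (Aᵀ * C) * diagonal E * Fᵀ) := by
    simp only [transpose_mul, diagonal_transpose, transpose_transpose, Matrix.mul_assoc]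
  rw [hcycle, trace_mul_comm, Matrix.mul_assoc _ Fᵀ B, trace]
  refine Finset.sum_congr rfl fun i _ => ?_
  rw [diag_apply, mul_apply]
  refine Finset.sum_congr rfl fun j _ => ?_
  have hFB : (Fᵀ * B) j i = (Bᵀ * F) i j := by
    rw [← transpose_apply (Bᵀ * F), transpose_mul, transpose_transpose]
  rw [mul_diagonal, diagonal_mul, hFB]
  ring

lemma trace_svd_transpose_mul_self {A : Matrix m κ R} {B : Matrix n κ R}
    (hA : Aᵀ * A = 1) (hB : Bᵀ * B = 1) (D : κ → R) :
    trace ((A * diagonal D * Bᵀ)ᵀ * (A * diagonal D * Bᵀ)) = ∑ i, D i ^ 2 := by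
  rw [trace_transpose_mul_diagonal_mul, hA, hB]
  simp [one_apply, sq]

end Trace

lemma two_mul_sum_mul_le_sum_add_sum {ι κ : Type*} [Fintype ι] [Fintype κ] {D : ι → ℝ}
    {E : κ → ℝ} (hD : ∀ i, 0 ≤ D i) (hE : ∀ j, 0 ≤ E j) (P Q : ι → κ → ℝ) :
    2 * ∑ i, ∑ j, D i * E j * P i j * Q i j ≤
      ∑ i, ∑ j, D i * E j * P i j * P i j + ∑ i, ∑ j, D i * E j * Q i j * Q i j := by
  simp only [Finset.mul_sum, ← Finset.sum_add_distrib]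
  refine Finset.sum_le_sum fun i _ => Finset.sum_le_sum fun j _ => ?_
  nlinarith [mul_nonneg (mul_nonneg (hD i) (hE j)) (sq_nonneg (P i j - Q i j))]

/-- If `M1 = U1 D1 V1ᵀ` and `M2 = U2 D2 V2ᵀ` are SVDs (orthonormal columns, nonnegative
diagonal), then `‖U1 D1 U1ᵀ − U2 D2 U2ᵀ‖_F² + ‖V1 D1 V1ᵀ − V2 D2 V2ᵀ‖_F² ≤ 2‖M1 − M2‖_F²`. -/
theorem stmt4 {d1 d2 k : ℕ}
    (U1 U2 : Matrix (Fin d1) (Fin k) ℝ) (V1 V2 : Matrix (Fin d2) (Fin k) ℝ)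
    (D1 D2 : Fin k → ℝ)
    (hU1 : U1ᵀ * U1 = 1) (hU2 : U2ᵀ * U2 = 1)
    (hV1 : V1ᵀ * V1 = 1) (hV2 : V2ᵀ * V2 = 1)
    (hD1 : ∀ i, 0 ≤ D1 i) (hD2 : ∀ i, 0 ≤ D2 i) :
    frobSq (U1 * Matrix.diagonal D1 * U1ᵀ - U2 * Matrix.diagonal D2 * U2ᵀ) +
        frobSq (V1 * Matrix.diagonal D1 * V1ᵀ - V2 * Matrix.diagonal D2 * V2ᵀ) ≤
      2 * frobSq (U1 * Matrix.diagonal D1 * V1ᵀ - U2 * Matrix.diagonal D2 * V2ᵀ) := by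
  simp only [frobSq_sub, trace_transpose_mul_diagonal_mul,
    trace_svd_transpose_mul_self hU1 hU1, trace_svd_transpose_mul_self hU2 hU2,
    trace_svd_transpose_mul_self hV1 hV1, trace_svd_transpose_mul_self hV2 hV2,
    trace_svd_transpose_mul_self hU1 hV1, trace_svd_transpose_mul_self hU2 hV2]
  linarith [two_mul_sum_mul_le_sum_add_sum hD1 hD2 (U1ᵀ * U2) (V1ᵀ * V2)]
end
end
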